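/- Let R be a commutative ring, equip the free algebra R⟨X₁,…,Xₙ⟩ with a weight ℕ-gradation determined by positive integer degrees deg Xᵢ = nᵢ, let ≺ be an ℕ-graded monomial ordering on the standard monomial basis B, and let G be a monic Gröbner basis of the ideal I = ⟨G⟩. If the monomial algebra R⟨X₁,…,Xₙ⟩/⟨LM(G)⟩ is left Noetherian (Noetherian as a left module over itself), then both R⟨X₁,…,Xₙ⟩/⟨LH(G)⟩ and A = R⟨X₁,…,Xₙ⟩/I are left Noetherian. -/

import Mathlib

noncomputable section
open MonoidAlgebra
open scoped Classical

/-- Words in the alphabet `X_1, ..., X_n`: the standard monomial basis `B`. -/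
abbrev Word (n : ℕ) : Type := FreeMonoid (Fin n)

/-- The free `R`-algebra `R⟨X_1, ..., X_n⟩`, realized as the monoid algebra of the
free monoid on `n` letters over `R`. -/
abbrev FreeAlg (R : Type) [CommRing R] (n : ℕ) : Type := MonoidAlgebra R (Word n)

variable {R : Type} [CommRing R] {n : ℕ}

/-- The monomial (word) `w` viewed as an element of the free algebra. -/
def mono (R : Type) [CommRing R] {n : ℕ} (w : Word n) : FreeAlg R n :=
  MonoidAlgebra.of R (Word n) w

/-- A monomial ordering: a well-ordering on words compatible with two-sided multiplication. -/
def IsMonomialOrder (n : ℕ) [LinearOrder (Word n)] : Prop :=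
  WellFoundedLT (Word n) ∧ ∀ w u v s : Word n, u < v → w * u * s < w * v * s

/-- The leading monomial of `f` (with junk value `1` for `f = 0`). -/
def LMon [LinearOrder (Word n)] (f : FreeAlg R n) : Word n :=
  if h : f = 0 then 1 else f.coeff.support.max' (Finsupp.support_nonempty_iff.mpr (MonoidAlgebra.coeff_eq_zero.not.mpr h))

/-- The leading coefficient of `f`. -/
def LCoef [LinearOrder (Word n)] (f : FreeAlg R n) : R := f.coeff (LMon f)

/-- `f` is monic: it is nonzero and its leading coefficient is `1`. -/
def IsMonic [LinearOrder (Word n)] (f : FreeAlg R n) : Prop := f ≠ 0 ∧ LCoef f = 1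

/-- `v` divides `u` as words: `u = w * v * s` for some words `w, s`. -/
def MDvd {n : ℕ} (v u : Word n) : Prop := ∃ w s : Word n, u = w * v * s

/-- `G` is a monic Gröbner basis of the two-sided ideal `I`: every element of `G` is monic,
and the leading monomial of every nonzero element of `I` is divisible by the leading
monomial of some element of `G`. -/
def IsMonicGB [LinearOrder (Word n)] (G : Set (FreeAlg R n))
    (I : TwoSidedIdeal (FreeAlg R n)) : Prop :=
  (∀ g ∈ G, IsMonic g) ∧ ∀ f ∈ I, f ≠ 0 → ∃ g ∈ G, MDvd (LMon g) (LMon f)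

/-- The set `LM(S)` of leading monomials of the nonzero elements of `S`. -/
def LMset [LinearOrder (Word n)] (S : Set (FreeAlg R n)) : Set (Word n) :=
  {w | ∃ f ∈ S, f ≠ 0 ∧ LMon f = w}

/-- The weight degree of a word, for the weights `deg Xᵢ = d i`. -/
def wdeg {n : ℕ} (d : Fin n → ℕ) (w : Word n) : ℕ := ((FreeMonoid.toList w).map d).sum

/-- The maximal weight degree occurring in `f`. -/
def maxdeg (d : Fin n → ℕ) (f : FreeAlg R n) : ℕ := f.coeff.support.sup (wdeg d)

/-- The ℕ-leading homogeneous element `LH(f)` of `f`: the sum of the terms of `f` of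
maximal weight degree. -/
def LH (d : Fin n → ℕ) (f : FreeAlg R n) : FreeAlg R n :=
  ∑ w ∈ f.coeff.support.filter (fun w => wdeg d w = maxdeg d f), MonoidAlgebra.single w (f.coeff w)

/-- The set `LH(S)` of leading homogeneous elements of the nonzero elements of `S`. -/
def LHset (d : Fin n → ℕ) (S : Set (FreeAlg R n)) : Set (FreeAlg R n) :=
  {x | ∃ f ∈ S, f ≠ 0 ∧ x = LH d f}

/-- An ℕ-graded monomial ordering with respect to the weights `d`: a monomial ordering
such that words of smaller degree are smaller. -/
def IsGradedMonomialOrder {n : ℕ} (d : Fin n → ℕ) [LinearOrder (Word n)] : Prop :=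
  IsMonomialOrder n ∧ ∀ u v : Word n, wdeg d u < wdeg d v → u < v

/-- The quotient ring of the free algebra by a two-sided ideal. -/
abbrev QuotRing (I : TwoSidedIdeal (FreeAlg R n)) : Type := I.ringCon.Quotient

/-!
A strictly increasing chain of left ideals of `R⟨X⟩/⟨S⟩`, `S` monic, is sent to a strictly
increasing chain of left ideals of `R⟨X⟩/⟨LM(S)⟩` by taking the ideal generated by the leading
terms of the preimages. Strictness is a descent on leading monomials: if `L ⊆ L'` have the same
leading-term ideal, the leading term of any `f ∈ L'` is cancelled inside `L` without creating larger
words, by a two-sided multiple of some `g ∈ S` when `LM(g)` divides `LM(f)`, and otherwise by a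
combination of leading terms of `L`, since `⟨LM(S)⟩` has no coefficient at `LM(f)`. For an
ℕ-graded order `LH(g)` has the same leading term as `g`, so the same applies to `LH(G)`.
-/

section LeadingTerms

variable [LinearOrder (Word n)]

def LTerm (f : FreeAlg R n) : FreeAlg R n := single (LMon f) (LCoef f)

lemma LMon_mem_support {f : FreeAlg R n} (hf : f ≠ 0) : LMon f ∈ f.coeff.support := by
  rw [LMon, dif_neg hf]
  exact Finset.max'_mem _ _

lemma le_LMon {f : FreeAlg R n} {w : Word n} (hw : w ∈ f.coeff.support) : w ≤ LMon f := by
  have hf : f ≠ 0 := by rintro rfl; simp at hw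
  rw [LMon, dif_neg hf]
  exact Finset.le_max' _ _ hw

lemma LCoef_ne_zero {f : FreeAlg R n} (hf : f ≠ 0) : LCoef f ≠ 0 :=
  Finsupp.mem_support_iff.mp (LMon_mem_support hf)

lemma LMon_lt {f : FreeAlg R n} {m : Word n} (hf : f ≠ 0)
    (hle : ∀ w ∈ f.coeff.support, w ≤ m) (hm : f.coeff m = 0) : LMon f < m :=
  lt_of_le_of_ne (hle _ (LMon_mem_support hf)) fun h => LCoef_ne_zero hf (by rw [LCoef, h, hm])

lemma IsMonomialOrder.mul_le_mul (hord : IsMonomialOrder n) (w s : Word n) {u v : Word n}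
    (h : u ≤ v) : w * u * s ≤ w * v * s :=
  h.eq_or_lt.elim (fun h => h ▸ le_rfl) fun h => (hord.2 w u v s h).le

lemma IsMonomialOrder.le_of_mem_support_mul (hord : IsMonomialOrder n) {x y : FreeAlg R n}
    {u v : Word n} (hx : ∀ w ∈ x.coeff.support, w ≤ u) (hy : ∀ w ∈ y.coeff.support, w ≤ v) :
    ∀ w ∈ (x * y).coeff.support, w ≤ u * v := by
  intro w hw
  obtain ⟨a, ha, b, hb, rfl⟩ := Finset.mem_mul.mp (support_coeff_mul_subset x y hw)
  calc a * b = 1 * a * b := by rw [one_mul]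
    _ ≤ 1 * u * b := hord.mul_le_mul 1 b (hx a ha)
    _ = u * b * 1 := by rw [one_mul, mul_one]
    _ ≤ u * v * 1 := hord.mul_le_mul u 1 (hy b hb)
    _ = u * v := mul_one _

lemma le_of_mem_support_single {w u : Word n} {c : R} (hw : w ∈ (single u c).coeff.support) :
    w ≤ u :=
  (Finset.mem_singleton.mp (Finsupp.support_single_subset hw)).le

end LeadingTerms

section Matching

variable [LinearOrder (Word n)]

/-- Such a `y ∈ L` cancels the coefficient of `a` at `m` without creating words above `m`. -/
def IsMatchedAt (L : Ideal (FreeAlg R n)) (m : Word n) (a : FreeAlg R n) : Prop :=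
  ∃ y ∈ L, y.coeff m = a.coeff m ∧ ∀ w ∈ y.coeff.support, w ≤ m

variable {L : Ideal (FreeAlg R n)}

lemma IsMatchedAt.of_coeff_eq {m : Word n} {a b : FreeAlg R n} (ha : IsMatchedAt L m a)
    (h : a.coeff m = b.coeff m) : IsMatchedAt L m b := by
  obtain ⟨y, hy, hym, hle⟩ := ha
  exact ⟨y, hy, hym.trans h, hle⟩

lemma isMatchedAt_zero (m : Word n) : IsMatchedAt L m 0 :=
  ⟨0, L.zero_mem, rfl, by simp⟩

lemma IsMatchedAt.add {m : Word n} {a b : FreeAlg R n} (ha : IsMatchedAt L m a)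
    (hb : IsMatchedAt L m b) : IsMatchedAt L m (a + b) := by
  obtain ⟨y, hy, hym, hyle⟩ := ha
  obtain ⟨z, hz, hzm, hzle⟩ := hb
  refine ⟨y + z, L.add_mem hy hz, by simp [hym, hzm], fun w hw => ?_⟩
  rw [coeff_add] at hw
  exact (Finset.mem_union.mp (Finsupp.support_add hw)).elim (hyle w) (hzle w)

lemma isMatchedAt_LTerm {h : FreeAlg R n} (hh : h ∈ L) (m : Word n) :
    IsMatchedAt L m (LTerm h) := by
  by_cases hm : LMon h = m
  · exact ⟨h, hh, by simp [LTerm, LCoef, hm], fun w hw => hm ▸ le_LMon hw⟩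
  · refine (isMatchedAt_zero m).of_coeff_eq ?_
    simp [LTerm, hm]

lemma IsMatchedAt.single_mul (hord : IsMonomialOrder n) {a : FreeAlg R n}
    (ha : ∀ m, IsMatchedAt L m a) (u : Word n) (c : R) (m : Word n) :
    IsMatchedAt L m (single u c * a) := by
  by_cases hm : ∃ v, u * v = m
  · obtain ⟨v, rfl⟩ := hm
    obtain ⟨y, hy, hyv, hyle⟩ := ha v
    refine ⟨single u c * y, L.mul_mem_left _ hy, by simp [hyv], ?_⟩
    exact hord.le_of_mem_support_mul (fun _ => le_of_mem_support_single) hyle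
  · refine (isMatchedAt_zero m).of_coeff_eq ?_
    rw [coeff_single_mul_of_forall_mul_ne _ _ fun v hv => hm ⟨v, hv⟩]
    rfl

lemma isMatchedAt_of_mem_span_LTerm (hord : IsMonomialOrder n) {a : FreeAlg R n}
    (ha : a ∈ Ideal.span (LTerm '' (L : Set (FreeAlg R n)))) (m : Word n) :
    IsMatchedAt L m a := by
  induction ha using Submodule.span_induction generalizing m with
  | mem x hx =>
    obtain ⟨h, hh, rfl⟩ := hx
    exact isMatchedAt_LTerm hh m
  | zero => exact isMatchedAt_zero m
  | add x y _ _ hx hy => exact (hx m).add (hy m)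
  | smul p x _ hx =>
    induction p using MonoidAlgebra.induction_linear generalizing m with
    | zero => simpa using isMatchedAt_zero m
    | add p q hp hq => simpa only [smul_eq_mul, add_mul] using (hp m).add (hq m)
    | single u c => exact IsMatchedAt.single_mul hord hx u c m

lemma isMatchedAt_of_MDvd (hord : IsMonomialOrder n) {I : TwoSidedIdeal (FreeAlg R n)}
    (hIL : (I : Set (FreeAlg R n)) ⊆ L) {g : FreeAlg R n} (hgI : g ∈ I) (hg : LCoef g = 1)
    {m : Word n} (hdvd : MDvd (LMon g) m) (a : FreeAlg R n) : IsMatchedAt L m a := by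
  obtain ⟨w, s, rfl⟩ := hdvd
  refine ⟨single w (a.coeff (w * LMon g * s)) * g * single s 1,
    hIL (I.mul_mem_right _ _ (I.mul_mem_left _ _ hgI)), ?_, ?_⟩
  · rw [coeff_mul_single_mul, coeff_single_mul_mul, ← LCoef, hg, mul_one, mul_one]
  · exact hord.le_of_mem_support_mul
      (hord.le_of_mem_support_mul (fun _ => le_of_mem_support_single) fun _ => le_LMon)
      fun _ => le_of_mem_support_single

end Matching

section MonomialIdeal

lemma MDvd.mul_left {t w : Word n} (h : MDvd t w) (a : Word n) : MDvd t (a * w) := by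
  obtain ⟨u, s, rfl⟩ := h
  exact ⟨a * u, s, by simp only [mul_assoc]⟩

lemma MDvd.mul_right {t w : Word n} (h : MDvd t w) (b : Word n) : MDvd t (w * b) := by
  obtain ⟨u, s, rfl⟩ := h
  exact ⟨u, s * b, by simp only [mul_assoc]⟩

variable (R) in
def multiplesIdeal (T : Set (Word n)) : TwoSidedIdeal (FreeAlg R n) :=
  TwoSidedIdeal.mk' {f | ∀ w ∈ f.coeff.support, ∃ t ∈ T, MDvd t w}
    (by simp)
    (fun {x y} hx hy w hw => by
      rw [coeff_add] at hw
      exact (Finset.mem_union.mp (Finsupp.support_add hw)).elim (hx w) (hy w))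
    (fun {x} hx w hw => hx w (by simpa using hw))
    (fun {x y} hy w hw => by
      obtain ⟨a, -, b, hb, rfl⟩ := Finset.mem_mul.mp (support_coeff_mul_subset x y hw)
      obtain ⟨t, ht, hdvd⟩ := hy b hb
      exact ⟨t, ht, hdvd.mul_left a⟩)
    (fun {x y} hx w hw => by
      obtain ⟨a, ha, b, -, rfl⟩ := Finset.mem_mul.mp (support_coeff_mul_subset x y hw)
      obtain ⟨t, ht, hdvd⟩ := hx a ha
      exact ⟨t, ht, hdvd.mul_right b⟩)

lemma span_mono_le_multiplesIdeal (T : Set (Word n)) :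
    TwoSidedIdeal.span (mono R '' T) ≤ multiplesIdeal R T := by
  rw [TwoSidedIdeal.span_le]
  rintro _ ⟨t, ht, rfl⟩
  simp only [SetLike.mem_coe, multiplesIdeal, TwoSidedIdeal.mem_mk', Set.mem_ofPred_eq]
  intro w hw
  rw [Finset.mem_singleton.mp (Finsupp.support_single_subset hw)]
  exact ⟨t, ht, 1, 1, by simp⟩

lemma coeff_eq_zero_of_mem_span_mono {T : Set (Word n)} {x : FreeAlg R n}
    (hx : x ∈ TwoSidedIdeal.span (mono R '' T)) {m : Word n} (hm : ∀ t ∈ T, ¬ MDvd t m) :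
    x.coeff m = 0 := by
  by_contra h
  have hx' := span_mono_le_multiplesIdeal T hx
  simp only [multiplesIdeal, TwoSidedIdeal.mem_mk', Set.mem_ofPred_eq] at hx'
  obtain ⟨t, ht, hdvd⟩ := hx' m (Finsupp.mem_support_iff.mpr h)
  exact hm t ht hdvd

end MonomialIdeal

section Noetherian

variable [LinearOrder (Word n)]

def leadingIdeal (M : TwoSidedIdeal (FreeAlg R n)) (L : Ideal (FreeAlg R n)) :
    Ideal (QuotRing M) :=
  Ideal.map M.ringCon.mk' (Ideal.span (LTerm '' (L : Set (FreeAlg R n))))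

lemma leadingIdeal_mono (M : TwoSidedIdeal (FreeAlg R n)) : Monotone (leadingIdeal M) :=
  fun _ _ h => Ideal.map_mono (Ideal.span_mono (Set.image_mono h))

lemma isMatchedAt_LTerm_of_leadingIdeal_le (hord : IsMonomialOrder n) {S : Set (FreeAlg R n)}
    (hS : ∀ g ∈ S, IsMonic g) {L L' : Ideal (FreeAlg R n)}
    (hSL : (TwoSidedIdeal.span S : Set (FreeAlg R n)) ⊆ L)
    (hle : leadingIdeal (TwoSidedIdeal.span (mono R '' LMset S)) L' ≤
      leadingIdeal (TwoSidedIdeal.span (mono R '' LMset S)) L)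
    {f : FreeAlg R n} (hf : f ∈ L') : IsMatchedAt L (LMon f) (LTerm f) := by
  set M := TwoSidedIdeal.span (mono R '' LMset S)
  by_cases hdvd : ∃ g ∈ S, MDvd (LMon g) (LMon f)
  · obtain ⟨g, hg, hdvd⟩ := hdvd
    exact isMatchedAt_of_MDvd hord hSL (TwoSidedIdeal.subset_span hg) (hS g hg).2 hdvd _
  · obtain ⟨a, ha, hπ⟩ := (Ideal.mem_map_iff_of_surjective _ M.ringCon.mk'_surjective).mp
      (hle (Ideal.mem_map_of_mem _ (Ideal.subset_span ⟨f, hf, rfl⟩)))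
    have haM : a - LTerm f ∈ M := by
      rw [← TwoSidedIdeal.ker_ringCon_mk' M, TwoSidedIdeal.mem_ker, map_sub, hπ, sub_self]
    have hcoeff := coeff_eq_zero_of_mem_span_mono haM (m := LMon f) <| by
      rintro _ ⟨g, hg, -, rfl⟩
      exact fun h => hdvd ⟨g, hg, h⟩
    rw [coeff_sub, Finsupp.sub_apply, sub_eq_zero] at hcoeff
    exact (isMatchedAt_of_mem_span_LTerm hord ha _).of_coeff_eq hcoeff

lemma le_of_leadingIdeal_le (hord : IsMonomialOrder n) {S : Set (FreeAlg R n)}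
    (hS : ∀ g ∈ S, IsMonic g) {L L' : Ideal (FreeAlg R n)}
    (hSL : (TwoSidedIdeal.span S : Set (FreeAlg R n)) ⊆ L) (hLL' : L ≤ L')
    (hle : leadingIdeal (TwoSidedIdeal.span (mono R '' LMset S)) L' ≤
      leadingIdeal (TwoSidedIdeal.span (mono R '' LMset S)) L) :
    L' ≤ L := by
  have := hord.1
  suffices h : ∀ m, ∀ f ∈ L', LMon f = m → f ∈ L from fun f hf => h _ f hf rfl
  intro m
  induction m using WellFoundedLT.induction with
  | _ m ih =>
    rintro f hf rfl
    by_cases hf0 : f = 0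
    · exact hf0 ▸ L.zero_mem
    obtain ⟨y, hyL, hy, hyle⟩ := isMatchedAt_LTerm_of_leadingIdeal_le hord hS hSL hle hf
    have hfy : f - y ∈ L' := L'.sub_mem hf (hLL' hyL)
    suffices f - y ∈ L by simpa using L.add_mem this hyL
    by_cases hfy0 : f - y = 0
    · exact hfy0 ▸ L.zero_mem
    refine ih _ (LMon_lt hfy0 (fun w hw => ?_) ?_) _ hfy rfl
    · rw [coeff_sub] at hw
      exact (Finset.mem_union.mp (Finsupp.support_sub hw)).elim le_LMon (hyle w)
    · simp [hy, LTerm, LCoef]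

theorem isNoetherianRing_quotRing_span (hord : IsMonomialOrder n) {S : Set (FreeAlg R n)}
    (hS : ∀ g ∈ S, IsMonic g)
    (hN : IsNoetherianRing (QuotRing (TwoSidedIdeal.span (mono R '' LMset S)))) :
    IsNoetherianRing (QuotRing (TwoSidedIdeal.span S)) := by
  set I := TwoSidedIdeal.span S
  set M := TwoSidedIdeal.span (mono R '' LMset S)
  let Ψ : Ideal (QuotRing I) → Ideal (QuotRing M) := fun J => leadingIdeal M (J.comap I.ringCon.mk')
  have hΨ : StrictMono Ψ := by
    intro J J' hJJ'
    have hcomap := Ideal.comap_mono (f := I.ringCon.mk') hJJ'.le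
    refine lt_of_le_not_ge (leadingIdeal_mono M hcomap) fun hle => hJJ'.not_ge ?_
    refine (Ideal.comap_le_comap_iff_of_surjective _ I.ringCon.mk'_surjective _ _).mp
      (le_of_leadingIdeal_le hord hS (fun x hx => ?_) hcomap hle)
    have hx0 : I.ringCon.mk' x = 0 := by
      rwa [← TwoSidedIdeal.mem_ker, TwoSidedIdeal.ker_ringCon_mk']
    rw [SetLike.mem_coe, Ideal.mem_comap, hx0]
    exact J.zero_mem
  rw [isNoetherianRing_iff, isNoetherian_iff']
  have : WellFoundedGT (Ideal (QuotRing M)) := isNoetherian_iff'.mp hN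
  exact hΨ.wellFoundedGT

end Noetherian

section LeadingHomogeneous

variable [LinearOrder (Word n)] {d : Fin n → ℕ}

lemma coeff_LH (d : Fin n → ℕ) (f : FreeAlg R n) (w : Word n) :
    (LH d f).coeff w = if wdeg d w = maxdeg d f then f.coeff w else 0 := by
  by_cases hw : w ∈ f.coeff.support
  · simp [LH, coeff_sum, Finset.sum_apply', Finsupp.single_apply, hw]
  · simp [LH, coeff_sum, Finset.sum_apply', Finsupp.single_apply, Finsupp.notMem_support_iff.mp hw]

lemma support_LH_subset (d : Fin n → ℕ) (f : FreeAlg R n) :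
    (LH d f).coeff.support ⊆ f.coeff.support := by
  intro w hw
  rw [Finsupp.mem_support_iff, coeff_LH] at hw
  rw [Finsupp.mem_support_iff]
  exact fun h => hw (by simp [h])

lemma wdeg_LMon (hdeg : ∀ u v : Word n, wdeg d u < wdeg d v → u < v) {f : FreeAlg R n}
    (hf : f ≠ 0) : wdeg d (LMon f) = maxdeg d f :=
  le_antisymm (Finset.le_sup (LMon_mem_support hf)) <|
    Finset.sup_le fun _ hw => le_of_not_gt fun h => (hdeg _ _ h).not_ge (le_LMon hw)

lemma coeff_LH_LMon (hdeg : ∀ u v : Word n, wdeg d u < wdeg d v → u < v) {f : FreeAlg R n}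
    (hf : f ≠ 0) : (LH d f).coeff (LMon f) = LCoef f := by
  rw [coeff_LH, if_pos (wdeg_LMon hdeg hf), LCoef]

lemma LH_ne_zero (hdeg : ∀ u v : Word n, wdeg d u < wdeg d v → u < v) {f : FreeAlg R n}
    (hf : f ≠ 0) : LH d f ≠ 0 := fun h =>
  LCoef_ne_zero hf (by rw [← coeff_LH_LMon hdeg hf, h, coeff_zero, Finsupp.coe_zero, Pi.zero_apply])

lemma LMon_LH (hdeg : ∀ u v : Word n, wdeg d u < wdeg d v → u < v) {f : FreeAlg R n}
    (hf : f ≠ 0) : LMon (LH d f) = LMon f :=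
  le_antisymm (le_LMon (support_LH_subset d f (LMon_mem_support (LH_ne_zero hdeg hf))))
    (le_LMon (Finsupp.mem_support_iff.mpr (by rw [coeff_LH_LMon hdeg hf]; exact LCoef_ne_zero hf)))

lemma IsMonic.LH (hdeg : ∀ u v : Word n, wdeg d u < wdeg d v → u < v) {f : FreeAlg R n}
    (hf : IsMonic f) : IsMonic (LH d f) :=
  ⟨LH_ne_zero hdeg hf.1, by rw [LCoef, LMon_LH hdeg hf.1, coeff_LH_LMon hdeg hf.1, hf.2]⟩

lemma LMset_LHset (hdeg : ∀ u v : Word n, wdeg d u < wdeg d v → u < v) (G : Set (FreeAlg R n)) :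
    LMset (LHset d G) = LMset G := by
  ext w
  constructor
  · rintro ⟨_, ⟨g, hg, hg0, rfl⟩, -, rfl⟩
    exact ⟨g, hg, hg0, (LMon_LH hdeg hg0).symm⟩
  · rintro ⟨g, hg, hg0, rfl⟩
    exact ⟨LH d g, ⟨g, hg, hg0, rfl⟩, LH_ne_zero hdeg hg0, LMon_LH hdeg hg0⟩

end LeadingHomogeneous

theorem noetherian_lifts_general [LinearOrder (Word n)]
    (d : Fin n → ℕ) (hord : IsGradedMonomialOrder d)
    (G : Set (FreeAlg R n)) (hGB : IsMonicGB G (TwoSidedIdeal.span G))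
    (hN : IsNoetherianRing (QuotRing (TwoSidedIdeal.span (mono R '' LMset G)))) :
    IsNoetherianRing (QuotRing (TwoSidedIdeal.span (LHset d G))) ∧
    IsNoetherianRing (QuotRing (TwoSidedIdeal.span G)) := by
  have hLH : ∀ g ∈ LHset d G, IsMonic g := by
    rintro _ ⟨g, hg, -, rfl⟩
    exact (hGB.1 g hg).LH hord.2
  refine ⟨isNoetherianRing_quotRing_span hord.1 hLH ?_, isNoetherianRing_quotRing_span hord.1 hGB.1 hN⟩
  rwa [LMset_LHset hord.2]

/-- If `G` is a monic Gröbner basis of `I = ⟨G⟩` with respect to an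
ℕ-graded monomial ordering and the monomial algebra `R⟨X⟩/⟨LM(G)⟩` is left Noetherian, then so are
`R⟨X⟩/⟨LH(G)⟩` and `A = R⟨X⟩/I`. -/
theorem noetherian_lifts [LinearOrder (Word n)]
    (d : Fin n → ℕ) (hd : ∀ i, 0 < d i) (hord : IsGradedMonomialOrder d)
    (G : Set (FreeAlg R n)) (hGB : IsMonicGB G (TwoSidedIdeal.span G))
    (hN : IsNoetherianRing (QuotRing (TwoSidedIdeal.span (mono R '' LMset G)))) :
    IsNoetherianRing (QuotRing (TwoSidedIdeal.span (LHset d G))) ∧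
    IsNoetherianRing (QuotRing (TwoSidedIdeal.span G)) :=
  noetherian_lifts_general d hord G hGB hN
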